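/- Let M be a Γ-semiring and B a bi-Γ-ideal of M. Then B is a minimal generalized bi-Γ-ideal of M if and only if B, regarded as a Γ-semiring, is GB-simple. -/

import Mathlib

/-- A Γ-semiring: additive commutative semigroups `M` and `G` with a triple
product `M → G → M → M` satisfying distributivity and associativity laws. -/
structure GammaSemiring (M G : Type*) [AddCommSemigroup M] [AddCommSemigroup G] where
  tmul : M → G → M → M
  left_distrib : ∀ a γ b c, tmul a γ (b + c) = tmul a γ b + tmul a γ c
  right_distrib : ∀ a b γ c, tmul (a + b) γ c = tmul a γ c + tmul b γ c
  gamma_distrib : ∀ a γ δ b, tmul a (γ + δ) b = tmul a γ b + tmul a δ b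
  mul_assoc : ∀ a γ b δ c, tmul (tmul a γ b) δ c = tmul a γ (tmul b δ c)

namespace GammaSemiring

variable {M G : Type*} [AddCommSemigroup M] [AddCommSemigroup G]

/-- `AΓB`: the set of all finite (nonempty) sums `Σᵢ aᵢγᵢbᵢ` with `aᵢ ∈ A`,
`γᵢ ∈ Γ`, `bᵢ ∈ B`, realized as the additive subsemigroup closure of the set
of single products. -/
def sprod (gs : GammaSemiring M G) (A B : Set M) : Set M :=
  (AddSubsemigroup.closure {x | ∃ a ∈ A, ∃ γ : G, ∃ b ∈ B, x = gs.tmul a γ b} :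
    AddSubsemigroup M)

/-- A generalized bi-Γ-ideal of `M`: a nonempty subset `A` with `AΓMΓA ⊆ A`. -/
def IsGenBiIdeal (gs : GammaSemiring M G) (A : Set M) : Prop :=
  A.Nonempty ∧ gs.sprod (gs.sprod A Set.univ) A ⊆ A

/-- A sub-Γ-semiring: nonempty, closed under addition and the Γ-product. -/
def IsSubGammaSemiring (gs : GammaSemiring M G) (T : Set M) : Prop :=
  T.Nonempty ∧ (∀ a ∈ T, ∀ b ∈ T, a + b ∈ T) ∧
    ∀ a ∈ T, ∀ γ : G, ∀ b ∈ T, gs.tmul a γ b ∈ T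

/-- A generalized bi-Γ-ideal of the Γ-semiring `T` (a subset of `M`):
a nonempty subset `A ⊆ T` with `AΓTΓA ⊆ A`. -/
def IsGenBiIdealIn (gs : GammaSemiring M G) (T A : Set M) : Prop :=
  A.Nonempty ∧ A ⊆ T ∧ gs.sprod (gs.sprod A T) A ⊆ A

/-- A Γ-ideal of `M`. -/
def IsGammaIdeal (gs : GammaSemiring M G) (A : Set M) : Prop :=
  A.Nonempty ∧ (∀ a ∈ A, ∀ b ∈ A, a + b ∈ A) ∧
    ∀ a ∈ A, ∀ γ : G, ∀ x : M, gs.tmul x γ a ∈ A ∧ gs.tmul a γ x ∈ A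

/-- A quasi-Γ-ideal of `M`: a sub-Γ-semiring `A` with `AΓM ∩ MΓA ⊆ A`. -/
def IsQuasiGammaIdeal (gs : GammaSemiring M G) (A : Set M) : Prop :=
  gs.IsSubGammaSemiring A ∧ gs.sprod A Set.univ ∩ gs.sprod Set.univ A ⊆ A

/-- A bi-Γ-ideal of `M`: a sub-Γ-semiring `A` with `AΓMΓA ⊆ A`. -/
def IsBiIdeal (gs : GammaSemiring M G) (A : Set M) : Prop :=
  gs.IsSubGammaSemiring A ∧ gs.sprod (gs.sprod A Set.univ) A ⊆ A

/-- `M` is GB-simple: `M` is its unique generalized bi-Γ-ideal. -/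
def GBSimple (gs : GammaSemiring M G) : Prop :=
  ∀ A : Set M, gs.IsGenBiIdeal A → A = Set.univ

/-- The sub-Γ-semiring `T`, regarded as a Γ-semiring, is GB-simple. -/
def GBSimpleIn (gs : GammaSemiring M G) (T : Set M) : Prop :=
  ∀ A : Set M, gs.IsGenBiIdealIn T A → A = T

end GammaSemiring

open GammaSemiring

variable {M G : Type*} [AddCommSemigroup M] [AddCommSemigroup G]

/-! If `A` is a generalized bi-Γ-ideal of the Γ-semiring `B`, then `AΓBΓA ⊆ A` is a generalized
bi-Γ-ideal of `M`, because `(AΓBΓA)ΓMΓ(AΓBΓA) = AΓ(BΓ(AΓMΓA)ΓB)ΓA` and the middle factor lies in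
`BΓMΓB ⊆ B`; minimality of `B` then gives `A = B`. (When `Γ` is empty every product is empty and
`A` itself is a generalized bi-Γ-ideal of `M`.) Conversely a generalized bi-Γ-ideal `C ⊆ B` of `M`
satisfies `CΓBΓC ⊆ CΓMΓC ⊆ C`, so GB-simplicity of `B` gives `C = B`. -/

namespace GammaSemiring

section sprod

variable (gs : GammaSemiring M G) {A B C : Set M}

theorem tmul_mem_sprod {a b : M} (ha : a ∈ A) (γ : G) (hb : b ∈ B) :
    gs.tmul a γ b ∈ gs.sprod A B :=
  AddSubsemigroup.subset_closure ⟨a, ha, γ, b, hb, rfl⟩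

theorem add_mem_sprod {x y : M} (hx : x ∈ gs.sprod A B) (hy : y ∈ gs.sprod A B) :
    x + y ∈ gs.sprod A B :=
  AddSubsemigroup.add_mem _ hx hy

theorem sprod_induction {p : M → Prop}
    (tmul : ∀ a ∈ A, ∀ γ : G, ∀ b ∈ B, p (gs.tmul a γ b))
    (add : ∀ x y, p x → p y → p (x + y)) {x : M} (hx : x ∈ gs.sprod A B) : p x := by
  refine AddSubsemigroup.closure_induction (p := fun x _ => p x) ?_
    (fun x y _ _ => add x y) hx
  rintro _ ⟨a, ha, γ, b, hb, rfl⟩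
  exact tmul a ha γ b hb

theorem sprod_mono {A' B' : Set M} (hA : A ⊆ A') (hB : B ⊆ B') :
    gs.sprod A B ⊆ gs.sprod A' B' := fun _ =>
  gs.sprod_induction (fun _ ha γ _ hb => gs.tmul_mem_sprod (hA ha) γ (hB hb))
    (fun _ _ => gs.add_mem_sprod)

theorem sprod_nonempty [Nonempty G] (hA : A.Nonempty) (hB : B.Nonempty) :
    (gs.sprod A B).Nonempty :=
  hA.elim fun _ ha => hB.elim fun _ hb => ⟨_, gs.tmul_mem_sprod ha (Classical.arbitrary G) hb⟩

theorem sprod_eq_empty [IsEmpty G] : gs.sprod A B = ∅ :=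
  Set.eq_empty_of_forall_notMem fun _ =>
    gs.sprod_induction (p := fun _ => False) (fun _ _ γ => isEmptyElim γ) (fun _ _ h _ => h)

theorem sprod_assoc : gs.sprod (gs.sprod A B) C = gs.sprod A (gs.sprod B C) := by
  apply Set.Subset.antisymm <;> intro x hx
  · refine gs.sprod_induction (fun s hs γ c hc => ?_) (fun _ _ => gs.add_mem_sprod) hx
    refine gs.sprod_induction (p := fun s => gs.tmul s γ c ∈ _)
      (fun a ha δ b hb => ?_) (fun s t hs ht => ?_) hs
    · rw [gs.mul_assoc]
      exact gs.tmul_mem_sprod ha δ (gs.tmul_mem_sprod hb γ hc)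
    · rw [gs.right_distrib]
      exact gs.add_mem_sprod hs ht
  · refine gs.sprod_induction (fun a ha γ t ht => ?_) (fun _ _ => gs.add_mem_sprod) hx
    refine gs.sprod_induction (p := fun t => gs.tmul a γ t ∈ _)
      (fun b hb δ c hc => ?_) (fun s t hs ht => ?_) ht
    · rw [← gs.mul_assoc]
      exact gs.tmul_mem_sprod (gs.tmul_mem_sprod ha γ hb) δ hc
    · rw [gs.left_distrib]
      exact gs.add_mem_sprod hs ht

end sprod

variable {gs : GammaSemiring M G} {A B T : Set M}

theorem IsBiIdeal.isGenBiIdeal (hB : gs.IsBiIdeal B) : gs.IsGenBiIdeal B :=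
  ⟨hB.1.1, hB.2⟩

theorem IsGenBiIdeal.sprod_sprod_subset (hB : gs.IsGenBiIdeal B) (X : Set M) :
    gs.sprod (gs.sprod B X) B ⊆ B :=
  (gs.sprod_mono (gs.sprod_mono subset_rfl (Set.subset_univ X)) subset_rfl).trans hB.2

theorem IsGenBiIdeal.isGenBiIdealIn (hA : gs.IsGenBiIdeal A) (hAT : A ⊆ T) :
    gs.IsGenBiIdealIn T A :=
  ⟨hA.1, hAT, hA.sprod_sprod_subset T⟩

theorem isGenBiIdeal_of_isEmpty [IsEmpty G] (hA : A.Nonempty) : gs.IsGenBiIdeal A :=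
  ⟨hA, by rw [gs.sprod_eq_empty]; exact Set.empty_subset A⟩

theorem IsGenBiIdeal.isGenBiIdeal_sprod_sprod [Nonempty G] (hB : gs.IsGenBiIdeal B)
    (hA : A.Nonempty) : gs.IsGenBiIdeal (gs.sprod (gs.sprod A B) A) := by
  refine ⟨gs.sprod_nonempty (gs.sprod_nonempty hA hB.1) hA, ?_⟩
  have regroup : gs.sprod (gs.sprod (gs.sprod (gs.sprod A B) A) Set.univ)
        (gs.sprod (gs.sprod A B) A) =
      gs.sprod (gs.sprod A (gs.sprod (gs.sprod B (gs.sprod (gs.sprod A Set.univ) A)) B)) A := by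
    simp only [sprod_assoc]
  rw [regroup]
  exact gs.sprod_mono (gs.sprod_mono subset_rfl (hB.sprod_sprod_subset _)) subset_rfl

end GammaSemiring

theorem stmt16 (gs : GammaSemiring M G) (B : Set M) (hB : gs.IsBiIdeal B) :
    (gs.IsGenBiIdeal B ∧ ∀ C : Set M, gs.IsGenBiIdeal C → C ⊆ B → C = B) ↔
      gs.GBSimpleIn B := by
  constructor
  · rintro ⟨hBgen, hmin⟩ A ⟨hA, hAB, hABA⟩
    cases isEmpty_or_nonempty G
    · exact hmin A (isGenBiIdeal_of_isEmpty hA) hAB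
    · have hC := hmin _ (hBgen.isGenBiIdeal_sprod_sprod hA) (hABA.trans hAB)
      exact hAB.antisymm (hC ▸ hABA)
  · exact fun hsimple => ⟨hB.isGenBiIdeal,
      fun C hC hCB => hsimple C (hC.isGenBiIdealIn hCB)⟩
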